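/- arXiv:2203.06791 — 5 statements merged into one kernel-verified Lean document; each statement's English description precedes it below -/
import Mathlib

section
/- The L1-sensitivity of the aggregation error AE is 2(1 - 1/n): if B' is obtained from B = (x_1,...,x_n) by incrementing exactly one entry x_j by 1, then |AE(B') - AE(B)| ≤ 2(1 - 1/n), and this bound is tight (attained for some B). -/
/-! Subtracting the mean is linear, so `AE` is a seminorm (the ℓ¹ norm of the centred vector).
By the reverse triangle inequality, incrementing `x j` changes `AE` by at most
`AE (Pi.single j 1) = (1 - 1/n) + (n - 1) · 1/n`, with equality when starting from `x = 0`. -/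

noncomputable def AE (n : ℕ) (x : Fin n → ℝ) : ℝ :=
  ∑ i, |x i - (∑ j, x j) / n|

open Finset

theorem Function.update_add_eq_add_single {ι M : Type*} [DecidableEq ι] [AddZeroClass M]
    (x : ι → M) (j : ι) (a : M) : Function.update x j (x j + a) = x + Pi.single j a := by
  ext i
  rcases eq_or_ne i j with rfl | hij
  · simp
  · simp [hij]

theorem AE_zero (n : ℕ) : AE n 0 = 0 := by simp [AE]

theorem AE_nonneg (n : ℕ) (x : Fin n → ℝ) : 0 ≤ AE n x :=
  sum_nonneg fun _ _ => abs_nonneg _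

theorem abs_AE_add_sub_AE_le (n : ℕ) (x y : Fin n → ℝ) : |AE n (x + y) - AE n x| ≤ AE n y := by
  have hdev : ∀ i, (x + y) i - (∑ k, (x + y) k) / n - (x i - (∑ k, x k) / n) =
      y i - (∑ k, y k) / n := by
    intro i
    simp only [Pi.add_apply, sum_add_distrib]
    ring
  calc |AE n (x + y) - AE n x|
      = |∑ i, (|(x + y) i - (∑ k, (x + y) k) / n| - |x i - (∑ k, x k) / n|)| := by
        rw [AE, AE, sum_sub_distrib]
    _ ≤ ∑ i, |(|(x + y) i - (∑ k, (x + y) k) / n| - |x i - (∑ k, x k) / n|)| :=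
        abs_sum_le_sum_abs _ _
    _ ≤ AE n y := sum_le_sum fun i _ => (abs_abs_sub_abs_le_abs_sub _ _).trans_eq (by rw [hdev])

theorem AE_single {n : ℕ} (j : Fin n) (a : ℝ) :
    AE n (Pi.single j a) = 2 * |a| * (1 - 1 / n) := by
  have hn : (1 : ℝ) ≤ n := by exact_mod_cast j.pos
  have hcard : (#({j}ᶜ : Finset (Fin n)) : ℝ) = n - 1 := by
    rw [card_compl, card_singleton, Fintype.card_fin, Nat.cast_sub j.pos, Nat.cast_one]
  have hself : |a - a / n| = |a| * (1 - 1 / n) := by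
    rw [show a - a / n = a * (1 - 1 / n) by ring, abs_mul,
      abs_of_nonneg (sub_nonneg.2 (div_le_one_of_le₀ hn (by positivity)))]
  have hrest : ∀ i ∈ ({j}ᶜ : Finset (Fin n)),
      |(Pi.single j a : Fin n → ℝ) i - a / n| = |a| / n := by
    intro i hi
    rw [Pi.single_eq_of_ne (by simpa using hi), zero_sub, abs_neg, abs_div, Nat.abs_cast]
  rw [AE, Fintype.sum_pi_single', Fintype.sum_eq_add_sum_compl j, Pi.single_eq_same, hself,
    sum_congr rfl hrest, sum_const, nsmul_eq_mul, hcard]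
  field_simp
  ring

theorem stmt_1 (n : ℕ) (hn : 0 < n) :
    (∀ (x : Fin n → ℝ) (j : Fin n),
      |AE n (Function.update x j (x j + 1)) - AE n x| ≤ 2 * (1 - 1 / (n : ℝ))) ∧
    (∃ (x : Fin n → ℝ) (j : Fin n),
      |AE n (Function.update x j (x j + 1)) - AE n x| = 2 * (1 - 1 / (n : ℝ))) := by
  have hAE (j : Fin n) : AE n (Pi.single j 1) = 2 * (1 - 1 / (n : ℝ)) := by
    rw [AE_single, abs_one, mul_one]
  refine ⟨fun x j => ?_, 0, ⟨0, hn⟩, ?_⟩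
  · rw [Function.update_add_eq_add_single, ← hAE j]
    exact abs_AE_add_sub_AE_le n x _
  · rw [Function.update_add_eq_add_single, zero_add, AE_zero, sub_zero,
      abs_of_nonneg (AE_nonneg _ _), hAE]
end

section
/- Adding an element to a block cannot decrease its aggregation error: if B = (x_1,...,x_k) has AE(B) = Σ_{i=1}^k |x_i - x̄| with x̄ the mean of B, and B⁺ = (x_1,...,x_k,x_{k+1}) with mean x̄⁺, then AE(B⁺) = Σ_{i=1}^{k+1} |x_i - x̄⁺| ≥ AE(B). -/
theorem stmt_2 (k : ℕ) (hk : 0 < k) (x : Fin k → ℝ) (y : ℝ) :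
    AE k x ≤ AE (k + 1) (Fin.snoc x y) := by
  classical
  set S := ∑ j, x j with hS
  have hk' : (k : ℝ) ≠ 0 := Nat.cast_ne_zero.mpr hk.ne'
  have hk1 : (k : ℝ) + 1 ≠ 0 := by positivity
  have hsum : ∑ j, (Fin.snoc x y : Fin (k + 1) → ℝ) j = S + y := by
    rw [Fin.sum_univ_castSucc]; simp [hS]
  set m := S / (k : ℝ) with hm
  set m' := (S + y) / ((k : ℝ) + 1) with hm'
  have hAE : AE (k + 1) (Fin.snoc x y) = (∑ i, |x i - m'|) + |y - m'| := by
    unfold AE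
    rw [hsum, Fin.sum_univ_castSucc]
    push_cast
    simp [hm']
  rw [hAE]
  have key : |y - m'| = (k : ℝ) * |m - m'| := by
    have h1 : y - m' = (k : ℝ) * (y - m) / ((k : ℝ) + 1) := by
      field_simp [hm, hm']; rw [hm, hm']; field_simp; ring
    have h2 : m - m' = (m - y) / ((k : ℝ) + 1) := by
      field_simp [hm, hm']; rw [hm, hm']; field_simp; ring
    rw [h1, h2, abs_div, abs_div, abs_mul,
      abs_of_pos (by positivity : (0:ℝ) < (k : ℝ) + 1),
      abs_sub_comm y m, abs_of_pos (by positivity : (0:ℝ) < (k : ℝ))]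
    ring
  have tri : ∀ i : Fin k, |x i - m| ≤ |x i - m'| + |m - m'| := by
    intro i
    calc |x i - m| = |(x i - m') + (m' - m)| := by rw [sub_add_sub_cancel]
    _ ≤ |x i - m'| + |m' - m| := abs_add_le _ _
    _ = |x i - m'| + |m - m'| := by rw [abs_sub_comm m' m]
  have hsumle := Finset.sum_le_sum (fun i (_ : i ∈ Finset.univ) => tri i)
  unfold AE
  calc ∑ i, |x i - S / (k : ℝ)|
      ≤ ∑ i : Fin k, (|x i - m'| + |m - m'|) := hsumle
    _ = (∑ i, |x i - m'|) + (k : ℝ) * |m - m'| := by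
        rw [Finset.sum_add_distrib, Finset.sum_const, Finset.card_univ,
          Fintype.card_fin, nsmul_eq_mul]
    _ = (∑ i, |x i - m'|) + |y - m'| := by rw [key]
end

section
/- Let f(x) = ln( Pr[x + Z > θ] / Pr[x - 2 + Z > θ] ) where Z ~ Laplace(0, λ). Then f(x) ≤ 2/λ whenever θ - x + 2 > 0, and f(x) ≤ (2/λ)·exp((θ - x + 2)/λ) whenever θ - x + 2 ≤ 0. -/
/-- Survival function of the Laplace(0, l) distribution: `Pr[Z > a]`. -/
noncomputable def laplaceSurv (l a : ℝ) : ℝ :=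
  if 0 ≤ a then (1 / 2) * Real.exp (-a / l) else 1 - (1 / 2) * Real.exp (a / l)

theorem stmt_9 (l θ x : ℝ) (hl : 0 < l) :
    (0 < θ - x + 2 →
      Real.log (laplaceSurv l (θ - x) / laplaceSurv l (θ - x + 2)) ≤ 2 / l) ∧
    (θ - x + 2 ≤ 0 →
      Real.log (laplaceSurv l (θ - x) / laplaceSurv l (θ - x + 2)) ≤
        (2 / l) * Real.exp ((θ - x + 2) / l)) := by
  set a := θ - x with ha
  constructor
  · intro h2
    have hS2 : laplaceSurv l (a + 2) = (1/2) * Real.exp (-(a + 2) / l) := by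
      rw [laplaceSurv, if_pos (by linarith)]
    rcases le_or_gt 0 a with hA | hA
    · have hS1 : laplaceSurv l a = (1/2) * Real.exp (-a / l) := by
        rw [laplaceSurv, if_pos hA]
      rw [hS1, hS2, mul_div_mul_left _ _ (by norm_num : (1/2:ℝ) ≠ 0),
        ← Real.exp_sub]
      rw [Real.log_exp]
      have h : -a / l - -(a + 2) / l = 2 / l := by field_simp; ring
      rw [h]
    · have hS1 : laplaceSurv l a = 1 - (1/2) * Real.exp (a / l) := by
        rw [laplaceSurv, if_neg (not_le.mpr hA)]
      set u := Real.exp (a / l) with hu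
      have hu1 : u < 1 := by
        rw [hu]
        exact Real.exp_lt_one_iff.mpr (div_neg_of_neg_of_pos hA hl)
      have hu0 : 0 < u := Real.exp_pos _
      have hden : 0 < (1/2:ℝ) * Real.exp (-(a + 2) / l) := by positivity
      rw [hS1, hS2, Real.log_le_iff_le_exp (by
        apply div_pos _ hden; linarith)]
      rw [div_le_iff₀ hden]
      have key : Real.exp (2 / l) * Real.exp (-(a + 2) / l) * u = 1 := by
        rw [← Real.exp_add, hu, ← Real.exp_add]
        rw [show 2 / l + -(a + 2) / l + a / l = 0 by field_simp; ring]
        exact Real.exp_zero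
      nlinarith [sq_nonneg (u - 1)]
  · intro h2
    have hA : a < 0 := by linarith
    have hS1 : laplaceSurv l a = 1 - (1/2) * Real.exp (a / l) := by
      rw [laplaceSurv, if_neg (not_le.mpr hA)]
    have hS2 : laplaceSurv l (a + 2) = 1 - (1/2) * Real.exp ((a + 2) / l) := by
      rcases eq_or_lt_of_le h2 with he | hlt
      · rw [laplaceSurv, if_pos (le_of_eq he.symm), he]
        norm_num
      · rw [laplaceSurv, if_neg (not_le.mpr hlt)]
    set u := Real.exp (a / l) with hu
    set v := Real.exp ((a + 2) / l) with hv
    have hs : 0 < 2 / l := by positivity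
    have hu0 : 0 < u := Real.exp_pos _
    have hv0 : 0 < v := Real.exp_pos _
    have hv1 : v ≤ 1 := by
      rw [hv]
      exact Real.exp_le_one_iff.mpr (div_nonpos_of_nonpos_of_nonneg h2 hl.le)
    have huv : u = v * Real.exp (-(2 / l)) := by
      rw [hu, hv, ← Real.exp_add]
      congr 1
      field_simp
      ring
    have hexp : 1 - 2 / l ≤ Real.exp (-(2 / l)) := by
      have := Real.add_one_le_exp (-(2 / l)); linarith
    have hvu : v - u ≤ (2 / l) * v := by
      have : v * (1 - 2 / l) ≤ v * Real.exp (-(2 / l)) :=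
        mul_le_mul_of_nonneg_left hexp hv0.le
      nlinarith
    have hden : 0 < 1 - (1/2) * v := by linarith
    have hu1 : u ≤ 1 := by
      rw [hu]
      exact Real.exp_le_one_iff.mpr (div_nonpos_of_nonpos_of_nonneg hA.le hl.le)
    have hnum : 0 < 1 - (1/2) * u := by linarith
    have hR : 0 < (1 - (1/2) * u) / (1 - (1/2) * v) := div_pos hnum hden
    have hRle : (1 - (1/2) * u) / (1 - (1/2) * v) ≤ 1 + (2 / l) * v := by
      rw [div_le_iff₀ hden]
      nlinarith [mul_nonneg (mul_nonneg hs.le hv0.le) (by linarith : (0:ℝ) ≤ 1 - v)]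
    have hlog := Real.log_le_sub_one_of_pos hR
    rw [hS1, hS2]
    calc Real.log ((1 - 1/2 * u) / (1 - 1/2 * v))
        ≤ (1 - (1/2) * u) / (1 - (1/2) * v) - 1 := by
          convert hlog using 3
      _ ≤ 2 / l * v := by linarith
end

section
/- The Laplace mechanism satisfies ε-DP: for f: D → ℝⁿ with L1-sensitivity Δ_f, releasing f(D) + (Z_1,...,Z_n) with Z_j i.i.d. Laplace(0, Δ_f/ε) is ε-differentially private. -/
/-! Moving the centre of a Laplace density from `b` to `a` multiplies it by at most
`exp (|a - b| / λ)`, by the triangle inequality in the exponent. For a product density the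
factors multiply to `exp (‖a - b‖₁ / λ)`, and with scale `λ = Δ / ε` the sensitivity bound
`‖f d - f d'‖₁ ≤ Δ` turns this into `exp ε`. A pointwise bound between densities integrates to
the same bound between the measures of every set. -/

open MeasureTheory Real

open scoped ENNReal

theorem MeasureTheory.withDensity_le_smul_withDensity {α : Type*} [MeasurableSpace α]
    {μ : Measure α} {f g : α → ℝ≥0∞} {c : ℝ≥0∞} (hc : c ≠ ∞) (hfg : ∀ x, f x ≤ c * g x) :
    μ.withDensity f ≤ c • μ.withDensity g := by
  rw [← withDensity_smul' c g hc]
  exact withDensity_mono (ae_of_all _ hfg)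

theorem Real.exp_neg_abs_sub_le_exp_mul_exp_neg_abs_sub {ε Δ : ℝ} (hε : 0 ≤ ε) (hΔ : 0 ≤ Δ)
    (x a b : ℝ) :
    exp (-(|x - a| * ε / Δ)) ≤ exp (|a - b| * ε / Δ) * exp (-(|x - b| * ε / Δ)) := by
  rw [← exp_add, exp_le_exp]
  have hrate : 0 ≤ ε / Δ := div_nonneg hε hΔ
  have htriangle : |x - b| ≤ |x - a| + |a - b| := abs_sub_le x a b
  simp only [mul_div_assoc]
  nlinarith

theorem Real.prod_mul_exp_neg_abs_sub_le {ι : Type*} [Fintype ι] {k ε Δ : ℝ} (hk : 0 ≤ k)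
    (hε : 0 ≤ ε) (hΔ : 0 ≤ Δ) (z a b : ι → ℝ) :
    ∏ i, k * exp (-(|z i - a i| * ε / Δ)) ≤
      exp ((∑ i, |a i - b i|) * ε / Δ) * ∏ i, k * exp (-(|z i - b i| * ε / Δ)) := by
  rw [Finset.sum_mul, Finset.sum_div, exp_sum, ← Finset.prod_mul_distrib]
  refine Finset.prod_le_prod (fun i _ => by positivity) fun i _ => ?_
  rw [mul_left_comm]
  exact mul_le_mul_of_nonneg_left
    (exp_neg_abs_sub_le_exp_mul_exp_neg_abs_sub hε hΔ (z i) (a i) (b i)) hk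

theorem stmt_15_general {D : Type*} (neighbor : D → D → Prop)
    (n : ℕ) (f : D → Fin n → ℝ) (Δ ε : ℝ) (hΔ : 0 < Δ) (hε : 0 < ε)
    (hsens : ∀ d d', neighbor d d' → ∑ i, |f d i - f d' i| ≤ Δ)
    (M : D → Measure (Fin n → ℝ))
    (hM : ∀ d, M d = (Measure.pi fun _ : Fin n => (volume : Measure ℝ)).withDensity
      fun z => ENNReal.ofReal (∏ i, ε / (2 * Δ) * Real.exp (-(|z i - f d i| * ε / Δ))))
    (d d' : D) (hnb : neighbor d d') (s : Set (Fin n → ℝ)) :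
    M d s ≤ ENNReal.ofReal (Real.exp ε) * M d' s := by
  have hprivacy_loss : (∑ i, |f d i - f d' i|) * ε / Δ ≤ ε := by
    rw [div_le_iff₀ hΔ, mul_comm ε]
    exact mul_le_mul_of_nonneg_right (hsens d d' hnb) hε.le
  have hdensity : ∀ z : Fin n → ℝ,
      ENNReal.ofReal (∏ i, ε / (2 * Δ) * exp (-(|z i - f d i| * ε / Δ))) ≤
        ENNReal.ofReal (exp ε) *
          ENNReal.ofReal (∏ i, ε / (2 * Δ) * exp (-(|z i - f d' i| * ε / Δ))) := by
    intro z
    rw [← ENNReal.ofReal_mul (exp_pos ε).le]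
    refine ENNReal.ofReal_le_ofReal
      ((prod_mul_exp_neg_abs_sub_le (by positivity) hε.le hΔ.le z (f d) (f d')).trans ?_)
    gcongr
  rw [hM, hM]
  exact withDensity_le_smul_withDensity ENNReal.ofReal_ne_top hdensity s

theorem stmt_15 {D : Type*} (neighbor : D → D → Prop)
    (n : ℕ) (f : D → Fin n → ℝ) (Δ ε : ℝ) (hΔ : 0 < Δ) (hε : 0 < ε)
    (hsens : ∀ d d', neighbor d d' → ∑ i, |f d i - f d' i| ≤ Δ)
    (M : D → Measure (Fin n → ℝ))
    (hM : ∀ d, M d = (Measure.pi fun _ : Fin n => (volume : Measure ℝ)).withDensity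
      fun z => ENNReal.ofReal (∏ i, ε / (2 * Δ) * Real.exp (-(|z i - f d i| * ε / Δ))))
    (d d' : D) (hnb : neighbor d d') (s : Set (Fin n → ℝ)) (hs : MeasurableSet s) :
    M d s ≤ ENNReal.ofReal (Real.exp ε) * M d' s :=
  stmt_15_general neighbor n f Δ ε hΔ hε hsens M hM d d' hnb s
end

section
/- The exponential mechanism with quality function q of sensitivity Δ_q, sampling y with probability proportional to exp(ε q(D, y)/(2Δ_q)) over a finite candidate set Y, is ε-differentially private. -/
theorem stmt_16 {D Y : Type*} [Fintype Y] [Nonempty Y]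
    (neighbor : D → D → Prop) (q : D → Y → ℝ) (Δq ε : ℝ)
    (hΔ : 0 < Δq) (hε : 0 < ε)
    (hsens : ∀ (y : Y) (d d' : D), neighbor d d' → |q d y - q d' y| ≤ Δq)
    (P : D → Y → ℝ)
    (hP : ∀ d y, P d y = Real.exp (ε * q d y / (2 * Δq)) /
      ∑ y', Real.exp (ε * q d y' / (2 * Δq)))
    (d d' : D) (hnb : neighbor d d') :
    ∀ s : Finset Y, ∑ y ∈ s, P d y ≤ Real.exp ε * ∑ y ∈ s, P d' y := by
  intro s
  have key : ∀ y : Y, P d y ≤ Real.exp ε * P d' y := by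
    intro y
    set a : Y → ℝ := fun y => ε * q d y / (2 * Δq) with ha
    set b : Y → ℝ := fun y => ε * q d' y / (2 * Δq) with hb
    have hdiff : ∀ y : Y, |a y - b y| ≤ ε / 2 := by
      intro y
      have : a y - b y = (ε / (2 * Δq)) * (q d y - q d' y) := by
        simp only [ha, hb]; ring
      rw [this, abs_mul, abs_of_pos (by positivity : (0:ℝ) < ε / (2 * Δq))]
      calc ε / (2 * Δq) * |q d y - q d' y| ≤ ε / (2 * Δq) * Δq := by
            exact mul_le_mul_of_nonneg_left (hsens y d d' hnb) (by positivity)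
        _ = ε / 2 := by field_simp
    have hstep : ∀ y : Y, Real.exp (a y) ≤ Real.exp (ε/2) * Real.exp (b y) := by
      intro y
      rw [← Real.exp_add]
      exact Real.exp_le_exp.2 (by linarith [abs_le.1 (hdiff y) |>.2])
    have hstep' : ∀ y : Y, Real.exp (b y) ≤ Real.exp (ε/2) * Real.exp (a y) := by
      intro y
      rw [← Real.exp_add]
      exact Real.exp_le_exp.2 (by linarith [abs_le.1 (hdiff y) |>.1])
    have hSpos : (0:ℝ) < ∑ y', Real.exp (a y') :=
      Finset.sum_pos (fun i _ => Real.exp_pos _) Finset.univ_nonempty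
    have hTpos : (0:ℝ) < ∑ y', Real.exp (b y') :=
      Finset.sum_pos (fun i _ => Real.exp_pos _) Finset.univ_nonempty
    have hTS : (∑ y', Real.exp (b y')) ≤ Real.exp (ε/2) * ∑ y', Real.exp (a y') := by
      rw [Finset.mul_sum]
      exact Finset.sum_le_sum fun i _ => hstep' i
    rw [hP, hP]
    have e1 : Real.exp (a y) / (∑ y', Real.exp (a y')) ≤
        Real.exp (ε/2) * (Real.exp (b y) / (∑ y', Real.exp (a y'))) := by
      rw [mul_div_assoc']
      gcongr
      exact hstep y
    refine e1.trans ?_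
    have e2 : Real.exp (b y) / (∑ y', Real.exp (a y')) ≤
        Real.exp (ε/2) * (Real.exp (b y) / (∑ y', Real.exp (b y'))) := by
      rw [mul_div_assoc', div_le_div_iff₀ hSpos hTpos]
      calc Real.exp (b y) * ∑ y', Real.exp (b y')
          ≤ Real.exp (b y) * (Real.exp (ε/2) * ∑ y', Real.exp (a y')) :=
            mul_le_mul_of_nonneg_left hTS (Real.exp_pos _).le
        _ = Real.exp (ε/2) * Real.exp (b y) * ∑ y', Real.exp (a y') := by ring
    calc Real.exp (ε/2) * (Real.exp (b y) / (∑ y', Real.exp (a y')))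
        ≤ Real.exp (ε/2) * (Real.exp (ε/2) * (Real.exp (b y) / (∑ y', Real.exp (b y')))) :=
          mul_le_mul_of_nonneg_left e2 (Real.exp_pos _).le
      _ = Real.exp ε * (Real.exp (b y) / (∑ y', Real.exp (b y'))) := by
          rw [← mul_assoc, ← Real.exp_add, add_halves]
  calc ∑ y ∈ s, P d y ≤ ∑ y ∈ s, Real.exp ε * P d' y := Finset.sum_le_sum fun y _ => key y
    _ = Real.exp ε * ∑ y ∈ s, P d' y := by rw [Finset.mul_sum]
end
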